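/- arXiv:math/0609519 — 5 statements merged into one kernel-verified Lean document; each statement's English description precedes it below -/
import Mathlib

section
/- Let ξ, η ∈ ℂ, f(λ) = λ, and suppose g : ℂ → ℂ is nonvanishing away from 0 and satisfies g(λ)f(λ+μ) − f(λ)g(λ+μ) + ξη·g(λ)f(μ)g(λ+μ) = 0 for all λ, μ. Then the function h(λ) = λ/g(λ) satisfies h(λ+μ) = h(λ) − ξη·μ for all λ, μ ≠ 0, hence h is affine: h(λ) = β − ξη·λ for some constant β, i.e. g(λ) = λ/(β − ξη·λ). -/
/-- Analysis of the functional equation H_{λ,μ} = 0 with f(λ) = λ: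
`h(λ) = λ/g(λ)` is affine, so g is the rational function (25). -/
theorem stmt_2 (ξ η : ℂ) (g : ℂ → ℂ)
    (hg0 : ∀ lam : ℂ, lam ≠ 0 → g lam ≠ 0)
    (hH : ∀ lam mu : ℂ,
      g lam * (lam + mu) - lam * g (lam + mu) + ξ * η * (g lam * mu * g (lam + mu)) = 0) :
    (∀ lam mu : ℂ, lam ≠ 0 → mu ≠ 0 → lam + mu ≠ 0 →
        (lam + mu) / g (lam + mu) = lam / g lam - ξ * η * mu) ∧
    ∃ β : ℂ, ∀ lam : ℂ, lam ≠ 0 →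
        lam / g lam = β - ξ * η * lam ∧ g lam = lam / (β - ξ * η * lam) := by
  have key : ∀ lam mu : ℂ, lam ≠ 0 → lam + mu ≠ 0 →
      (lam + mu) / g (lam + mu) = lam / g lam - ξ * η * mu := by
    intro lam mu hl hs
    have h1 := hH lam mu
    have hgl := hg0 lam hl
    have hgs := hg0 (lam + mu) hs
    field_simp
    linear_combination h1
  constructor
  · intro lam mu hl _ hs; exact key lam mu hl hs
  · refine ⟨1 / g 1 + ξ * η, ?_⟩
    intro lam hl
    have hmain : lam / g lam = 1 / g 1 + ξ * η - ξ * η * lam := by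
      by_cases h1 : lam = 1
      · subst h1; ring
      · have := key 1 (lam - 1) one_ne_zero (by simpa using hl)
        simp only [add_sub_cancel] at this
        rw [this]; ring
    refine ⟨hmain, ?_⟩
    have hne : (1 / g 1 + ξ * η - ξ * η * lam) ≠ 0 := by
      intro h
      rw [h] at hmain
      exact hl ((div_eq_zero_iff.mp hmain).resolve_right (hg0 lam hl))
    rw [← hmain]
    field_simp
end

section
/- Let ξ ∈ {1, −1} and η ∈ ℂ, and set β = η − ξ/2 and g(λ) = λ/(β − ξη·λ), f(λ) = λ. Then for all λ, μ ∈ ℂ where defined, g(λ) + g(μ) − g(λ+μ) + ξ f(λ)g(μ) + ξ g(λ)f(μ) + g(λ)g(μ) + η g(λ)g(μ)f(λ+μ) + η² g(λ)g(μ)g(λ+μ) = 0. -/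
/-- The Zamolodchikov-type function `g(λ) = λ/(β − ξηλ)` with `β = η − ξ/2`,
`ξ = ±1`, solves the functional equation G_{λ,μ} = 0 of (17)/(20). -/
theorem stmt_3 (ξ η β : ℂ) (hξ : ξ = 1 ∨ ξ = -1) (hβ : β = η - ξ / 2)
    (f g : ℂ → ℂ) (hf : ∀ lam : ℂ, f lam = lam)
    (hg : ∀ lam : ℂ, g lam = lam / (β - ξ * η * lam)) :
    ∀ lam mu : ℂ, β - ξ * η * lam ≠ 0 → β - ξ * η * mu ≠ 0 →
      β - ξ * η * (lam + mu) ≠ 0 →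
      g lam + g mu - g (lam + mu) + ξ * (f lam * g mu) + ξ * (g lam * f mu)
        + g lam * g mu + η * (g lam * g mu * f (lam + mu))
        + η ^ 2 * (g lam * g mu * g (lam + mu)) = 0 := by
  intro lam mu h1 h2 h3
  simp only [hf, hg, div_eq_mul_inv]
  set A := β - ξ * η * lam with hAdef
  set B := β - ξ * η * mu with hBdef
  set C := β - ξ * η * (lam + mu) with hCdef
  have ha : A * A⁻¹ = 1 := mul_inv_cancel₀ h1
  have hb : B * B⁻¹ = 1 := mul_inv_cancel₀ h2
  have hc : C * C⁻¹ = 1 := mul_inv_cancel₀ h3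
  have hN : lam * B * C + mu * A * C - (lam + mu) * A * B
      + ξ * lam * mu * A * C + ξ * lam * mu * B * C + lam * mu * C
      + η * lam * mu * (lam + mu) * C + η ^ 2 * lam * mu * (lam + mu) = 0 := by
    rw [hAdef, hBdef, hCdef]
    subst hβ
    rcases hξ with h | h <;> subst h <;> ring
  have hABC : A * B * C ≠ 0 := mul_ne_zero (mul_ne_zero h1 h2) h3
  have key : (lam * A⁻¹ + mu * B⁻¹ - (lam + mu) * C⁻¹ + ξ * (lam * (mu * B⁻¹))
      + ξ * (lam * A⁻¹ * mu) + lam * A⁻¹ * (mu * B⁻¹)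
      + η * (lam * A⁻¹ * (mu * B⁻¹) * (lam + mu))
      + η ^ 2 * (lam * A⁻¹ * (mu * B⁻¹) * ((lam + mu) * C⁻¹))) * (A * B * C) = 0 := by
    linear_combination hN
      + (lam * B * C + ξ * lam * mu * B * C + lam * mu * C
          + η * lam * mu * (lam + mu) * C + η ^ 2 * lam * mu * (lam + mu)) * ha
      + (mu * A * C + ξ * lam * mu * A * C
          + (lam * mu * C + η * lam * mu * (lam + mu) * C
              + η ^ 2 * lam * mu * (lam + mu)) * (A * A⁻¹)) * hb
      + (-(lam + mu) * A * B + η ^ 2 * lam * mu * (lam + mu) * (A * A⁻¹) * (B * B⁻¹)) * hc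
  exact (mul_eq_zero.mp key).resolve_right hABC
end

section
/- Let V be a finite-dimensional complex vector space, P the flip on V⊗V, and Q a projector on V⊗V with PQ = QP = ξQ (ξ a scalar) and Q₁₂Q₂₃Q₁₂ = η²Q₁₂ and Q₁₂P₂₃Q₁₂ = ηQ₁₂ on V⊗V⊗V for some scalar η. Then Q₁₂Q₂₃P₁₂ = ξη·Q₁₂P₂₃ and P₁₂Q₂₃Q₁₂ = ξη·P₂₃Q₁₂. -/
open TensorProduct

noncomputable section

variable {V : Type*} [AddCommGroup V] [Module ℂ V] [FiniteDimensional ℂ V]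

/-- For `M : V ⊗ V → V ⊗ V`, the operator `M₁₂ = M ⊗ id` on `(V ⊗ V) ⊗ V`. -/
def op12 (M : V ⊗[ℂ] V →ₗ[ℂ] V ⊗[ℂ] V) :
    (V ⊗[ℂ] V) ⊗[ℂ] V →ₗ[ℂ] (V ⊗[ℂ] V) ⊗[ℂ] V :=
  TensorProduct.map M LinearMap.id

/-- For `M : V ⊗ V → V ⊗ V`, the operator `M₂₃ = id ⊗ M` on `(V ⊗ V) ⊗ V`. -/
def op23 (M : V ⊗[ℂ] V →ₗ[ℂ] V ⊗[ℂ] V) :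
    (V ⊗[ℂ] V) ⊗[ℂ] V →ₗ[ℂ] (V ⊗[ℂ] V) ⊗[ℂ] V :=
  (TensorProduct.assoc ℂ V V V).symm.toLinearMap ∘ₗ
    TensorProduct.map LinearMap.id M ∘ₗ (TensorProduct.assoc ℂ V V V).toLinearMap

lemma op12_comp (A B : V ⊗[ℂ] V →ₗ[ℂ] V ⊗[ℂ] V) :
    op12 (A ∘ₗ B) = op12 A ∘ₗ op12 B := by
  simp [op12, ← TensorProduct.map_comp]

lemma op12_smul (c : ℂ) (A : V ⊗[ℂ] V →ₗ[ℂ] V ⊗[ℂ] V) :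
    op12 (c • A) = c • op12 A := by
  apply TensorProduct.ext'
  intro x w
  simp [op12, smul_tmul']

lemma op12_one : op12 (LinearMap.id : V ⊗[ℂ] V →ₗ[ℂ] V ⊗[ℂ] V) = LinearMap.id := by
  simp [op12]

lemma sigma_tmul (P : V ⊗[ℂ] V →ₗ[ℂ] V ⊗[ℂ] V)
    (hP : ∀ v w : V, P (v ⊗ₜ[ℂ] w) = w ⊗ₜ[ℂ] v) (t : V ⊗[ℂ] V) (w : V) :
    (op12 P ∘ₗ op23 P) (t ⊗ₜ[ℂ] w)
      = (TensorProduct.assoc ℂ V V V).symm (w ⊗ₜ[ℂ] t) := by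
  induction t using TensorProduct.induction_on with
  | zero => simp
  | tmul u v => simp [op12, op23, hP]
  | add x y hx hy =>
    simp only [add_tmul, tmul_add, map_add, hx, hy]

lemma comm_key (P Q : V ⊗[ℂ] V →ₗ[ℂ] V ⊗[ℂ] V)
    (hP : ∀ v w : V, P (v ⊗ₜ[ℂ] w) = w ⊗ₜ[ℂ] v) :
    op23 Q ∘ₗ (op12 P ∘ₗ op23 P) = (op12 P ∘ₗ op23 P) ∘ₗ op12 Q := by
  apply TensorProduct.ext'
  intro x w
  have h1 : (op23 Q ∘ₗ (op12 P ∘ₗ op23 P)) (x ⊗ₜ[ℂ] w)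
      = (TensorProduct.assoc ℂ V V V).symm (w ⊗ₜ[ℂ] Q x) := by
    have hs := sigma_tmul P hP x w
    simp only [LinearMap.comp_apply] at hs ⊢
    rw [hs]
    simp [op23]
  have h2 : ((op12 P ∘ₗ op23 P) ∘ₗ op12 Q) (x ⊗ₜ[ℂ] w)
      = (TensorProduct.assoc ℂ V V V).symm (w ⊗ₜ[ℂ] Q x) := by
    simp only [LinearMap.comp_apply, op12, TensorProduct.map_tmul, LinearMap.id_apply]
    exact sigma_tmul P hP (Q x) w
  rw [h1, h2]

/-- Derivation (13) of relations (10) of Lemma 1: for the flip `P` and a projector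
`Q` with `PQ = QP = ξQ`, `Q₁₂Q₂₃Q₁₂ = η²Q₁₂` and `Q₁₂P₂₃Q₁₂ = ηQ₁₂`, one has
`Q₁₂Q₂₃P₁₂ = ξη Q₁₂P₂₃` and `P₁₂Q₂₃Q₁₂ = ξη P₂₃Q₁₂`. -/
theorem stmt_5 (P Q : V ⊗[ℂ] V →ₗ[ℂ] V ⊗[ℂ] V) (ξ η : ℂ)
    (hP : ∀ v w : V, P (v ⊗ₜ[ℂ] w) = w ⊗ₜ[ℂ] v)
    (hQproj : Q ∘ₗ Q = Q)
    (hPQ : P ∘ₗ Q = ξ • Q) (hQP : Q ∘ₗ P = ξ • Q)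
    (hQQQ : op12 Q ∘ₗ op23 Q ∘ₗ op12 Q = η ^ 2 • op12 Q)
    (hQPQ : op12 Q ∘ₗ op23 P ∘ₗ op12 Q = η • op12 Q) :
    op12 Q ∘ₗ op23 Q ∘ₗ op12 P = (ξ * η) • (op12 Q ∘ₗ op23 P) ∧
    op12 P ∘ₗ op23 Q ∘ₗ op12 Q = (ξ * η) • (op23 P ∘ₗ op12 Q) := by
  set A : Module.End ℂ ((V ⊗[ℂ] V) ⊗[ℂ] V) := op12 P with hAdef
  set B : Module.End ℂ ((V ⊗[ℂ] V) ⊗[ℂ] V) := op23 P with hBdef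
  set q : Module.End ℂ ((V ⊗[ℂ] V) ⊗[ℂ] V) := op12 Q with hqdef
  set r : Module.End ℂ ((V ⊗[ℂ] V) ⊗[ℂ] V) := op23 Q with hrdef
  have hPP : P ∘ₗ P = LinearMap.id := by
    apply TensorProduct.ext'
    intro v w
    simp [hP]
  have hAA : A * A = 1 := by
    rw [Module.End.mul_eq_comp, hAdef, ← op12_comp, hPP, op12_one]
    rfl
  have hBB : B * B = 1 := by
    rw [Module.End.mul_eq_comp, hBdef]
    apply TensorProduct.ext_threefold
    intro u v w
    simp [op23, hP]
  have hσ : r * (A * B) = (A * B) * q := by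
    simp only [Module.End.mul_eq_comp]
    exact comm_key P Q hP
  have hqA : q * A = ξ • q := by
    rw [Module.End.mul_eq_comp, hqdef, hAdef, ← op12_comp, hQP, op12_smul]
  have hAq : A * q = ξ • q := by
    rw [Module.End.mul_eq_comp, hAdef, hqdef, ← op12_comp, hPQ, op12_smul]
  have hqBq : q * (B * q) = η • q := by
    simp only [Module.End.mul_eq_comp]
    exact hQPQ
  -- r * A = A * B * q * B
  have h1 : r * A = A * B * q * B := by
    calc r * A = r * (A * (B * B)) := by rw [hBB, mul_one]
      _ = (r * (A * B)) * B := by simp only [mul_assoc]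
      _ = (A * B) * q * B := by rw [hσ]
  -- first relation
  have goal1 : q * (r * A) = (ξ * η) • (q * B) := by
    calc q * (r * A) = q * (A * B * q * B) := by rw [h1]
      _ = (q * A) * (B * (q * B)) := by simp only [mul_assoc]
      _ = (ξ • q) * (B * (q * B)) := by rw [hqA]
      _ = ξ • (q * (B * (q * B))) := by rw [smul_mul_assoc]
      _ = ξ • ((q * (B * q)) * B) := by simp only [mul_assoc]
      _ = ξ • ((η • q) * B) := by rw [hqBq]
      _ = (ξ * η) • (q * B) := by rw [smul_mul_assoc, smul_smul]
  -- r in terms of q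
  have hABBA : (A * B) * (B * A) = 1 := by
    calc (A * B) * (B * A) = A * ((B * B) * A) := by simp only [mul_assoc]
      _ = A * A := by rw [hBB, one_mul]
      _ = 1 := hAA
  have hr : r = A * B * q * (B * A) := by
    calc r = r * ((A * B) * (B * A)) := by rw [hABBA, mul_one]
      _ = (r * (A * B)) * (B * A) := by simp only [mul_assoc]
      _ = A * B * q * (B * A) := by rw [hσ]
  have goal2 : A * (r * q) = (ξ * η) • (B * q) := by
    calc A * (r * q) = A * ((A * B * q * (B * A)) * q) := by rw [hr]
      _ = (A * A) * (B * (q * (B * (A * q)))) := by simp only [mul_assoc]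
      _ = B * (q * (B * (A * q))) := by rw [hAA, one_mul]
      _ = B * (q * (B * (ξ • q))) := by rw [hAq]
      _ = ξ • (B * (q * (B * q))) := by simp only [mul_smul_comm]
      _ = ξ • (B * (η • q)) := by rw [hqBq]
      _ = (ξ * η) • (B * q) := by rw [mul_smul_comm, smul_smul]
  constructor
  · have := goal1
    simpa only [Module.End.mul_eq_comp] using this
  · have := goal2
    simpa only [Module.End.mul_eq_comp] using this

end
end

section
/- Let A be an (n+1)×(n+1) matrix with A² = I, A = Aᵗ, and A D₀ A = (−1)^n D₀ A D₀ where D₀ = diag((−1)^k). Let π be the diagonal rank-one projector at position m. Then π (AπA) D₀ = (−1)^m · (−1)^n A_{mm} · π (A D₀ A), i.e. π π̂ D₀ = ξη · π D̂₀ with ξ = (−1)^m, η = (−1)^n A_{mm}. -/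
/-!
Since π A π = A_mm π and π D₀ = (−1)^m π, both sides reduce to A_mm · π A D₀: on the right the
Racah identity turns π (A D₀ A) into (−1)^n (−1)^m π A D₀, and the signs square away.
-/

open Matrix

theorem Matrix.single_mul_diagonal {ι R : Type*} [Fintype ι] [DecidableEq ι] [Semiring R]
    (i j : ι) (c : R) (d : ι → R) : single i j c * diagonal d = single i j (c * d j) := by
  ext a b
  by_cases h : i = a ∧ j = b
  · obtain ⟨rfl, rfl⟩ := h
    simp
  · simp [h]

theorem stmt_13_general (n : ℕ) (m : Fin (n + 1)) (A D₀ π : Matrix (Fin (n + 1)) (Fin (n + 1)) ℝ)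
    (hD₀ : D₀ = Matrix.diagonal fun k : Fin (n + 1) => (-1 : ℝ) ^ (k : ℕ))
    (hracah : A * D₀ * A = (-1 : ℝ) ^ n • (D₀ * A * D₀))
    (hπ : π = Matrix.single m m 1) :
    π * (A * π * A) * D₀ = ((-1 : ℝ) ^ (m : ℕ) * ((-1 : ℝ) ^ n * A m m)) • (π * (A * D₀ * A)) := by
  have hproj : π * A * π = A m m • π := by
    rw [hπ, single_mul_mul_single, one_mul, mul_one, smul_single, smul_eq_mul, mul_one]
  have hsign : π * D₀ = (-1 : ℝ) ^ (m : ℕ) • π := by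
    rw [hπ, hD₀, single_mul_diagonal, one_mul, smul_single, smul_eq_mul, mul_one]
  have hlhs : π * (A * π * A) * D₀ = A m m • (π * A * D₀) :=
    calc π * (A * π * A) * D₀ = π * A * π * A * D₀ := by simp only [Matrix.mul_assoc]
      _ = A m m • (π * A * D₀) := by rw [hproj, smul_mul, smul_mul]
  have hrhs : π * (A * D₀ * A) = ((-1 : ℝ) ^ n * (-1) ^ (m : ℕ)) • (π * A * D₀) := by
    rw [hracah, mul_smul_comm, ← Matrix.mul_assoc, ← Matrix.mul_assoc, hsign, smul_mul, smul_mul,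
      smul_smul]
  rw [hlhs, hrhs, smul_smul]
  congr 1
  calc A m m = ((-1 : ℝ) ^ (m : ℕ)) ^ 2 * ((-1 : ℝ) ^ n) ^ 2 * A m m := by simp [← pow_mul']
    _ = _ := by ring

/-- Analogue of relation (10) in Lemma 4: π π̂ D₀ = ξη π D̂₀ with
ξ = (−1)^m, η = (−1)ⁿ A_{mm}, D̂₀ = A D₀ A, π̂ = A π A. -/
theorem stmt_13 (n : ℕ) (m : Fin (n + 1)) (A D₀ π : Matrix (Fin (n + 1)) (Fin (n + 1)) ℝ)
    (hA2 : A * A = 1) (hsym : A = Aᵀ)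
    (hD₀ : D₀ = Matrix.diagonal fun k : Fin (n + 1) => (-1 : ℝ) ^ (k : ℕ))
    (hracah : A * D₀ * A = (-1 : ℝ) ^ n • (D₀ * A * D₀))
    (hπ : π = Matrix.single m m 1) :
    π * (A * π * A) * D₀ = ((-1 : ℝ) ^ (m : ℕ) * ((-1 : ℝ) ^ n * A m m)) • (π * (A * D₀ * A)) :=
  stmt_13_general n m A D₀ π hD₀ hracah hπ
end

section
/- Define η_{m,m}(s) = (2s)!·(4s−2m+1)! / ((2s−m)!·(4s−m+1)!) for integers/half-integers with 2 ≤ m ≤ 2s. Then for all s ≥ 1 and 2 ≤ m ≤ 2s one has 0 < η_{m,m}(s) < 1/2. -/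
lemma key_fact (a : ℕ) : ∀ m, 2 ≤ m →
    2 * Nat.factorial (a + m) * Nat.factorial (2 * a + 1) <
      Nat.factorial a * Nat.factorial (2 * a + m + 1) := by
  intro m hm
  induction m, hm using Nat.le_induction with
  | base =>
    have e1 : Nat.factorial (a + 2) = (a + 2) * ((a + 1) * Nat.factorial a) := by
      rw [show a + 2 = (a + 1) + 1 from rfl, Nat.factorial_succ, Nat.factorial_succ]
    have e2 : Nat.factorial (2 * a + 2 + 1) =
        (2 * a + 3) * ((2 * a + 2) * Nat.factorial (2 * a + 1)) := by
      rw [Nat.factorial_succ, Nat.factorial_succ]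
    rw [e1, e2]
    have h1 := Nat.factorial_pos a
    have h2 := Nat.factorial_pos (2 * a + 1)
    have hx : 0 < Nat.factorial a * Nat.factorial (2 * a + 1) := Nat.mul_pos h1 h2
    calc 2 * ((a + 2) * ((a + 1) * Nat.factorial a)) * Nat.factorial (2 * a + 1)
        = (2 * (a + 2) * (a + 1)) * (Nat.factorial a * Nat.factorial (2 * a + 1)) := by ring
      _ < ((2 * a + 3) * (2 * a + 2)) * (Nat.factorial a * Nat.factorial (2 * a + 1)) := by
          apply Nat.mul_lt_mul_of_lt_of_le _ (le_refl _) hx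
          nlinarith
      _ = Nat.factorial a * ((2 * a + 3) * ((2 * a + 2) * Nat.factorial (2 * a + 1))) := by
          ring
  | succ m hm ih =>
    have e1 : Nat.factorial (a + (m + 1)) = (a + m + 1) * Nat.factorial (a + m) := by
      rw [show a + (m + 1) = (a + m) + 1 from rfl, Nat.factorial_succ]
    have e2 : Nat.factorial (2 * a + (m + 1) + 1) =
        (2 * a + m + 2) * Nat.factorial (2 * a + m + 1) := by
      rw [show 2 * a + (m + 1) + 1 = (2 * a + m + 1) + 1 by ring, Nat.factorial_succ]
    rw [e1, e2]
    calc 2 * ((a + m + 1) * Nat.factorial (a + m)) * Nat.factorial (2 * a + 1)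
        = (a + m + 1) * (2 * Nat.factorial (a + m) * Nat.factorial (2 * a + 1)) := by ring
      _ ≤ (2 * a + m + 2) * (2 * Nat.factorial (a + m) * Nat.factorial (2 * a + 1)) := by
          exact Nat.mul_le_mul_right _ (by omega)
      _ < (2 * a + m + 2) * (Nat.factorial a * Nat.factorial (2 * a + m + 1)) := by
          exact mul_lt_mul_of_pos_left ih (by omega)
      _ = Nat.factorial a * ((2 * a + m + 2) * Nat.factorial (2 * a + m + 1)) := by ring

/-- Bound on η_{m,m} of formula (48), with N = 2s:
η = N!(2N−2m+1)!/((N−m)!(2N−m+1)!) satisfies 0 < η < 1/2 for 2 ≤ m ≤ N. -/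
theorem stmt_15 (N m : ℕ) (hs : 2 ≤ N) (hm2 : 2 ≤ m) (hmN : m ≤ N) :
    0 < ((Nat.factorial N * Nat.factorial (2 * N - 2 * m + 1) : ℝ) /
          (Nat.factorial (N - m) * Nat.factorial (2 * N - m + 1))) ∧
    ((Nat.factorial N * Nat.factorial (2 * N - 2 * m + 1) : ℝ) /
          (Nat.factorial (N - m) * Nat.factorial (2 * N - m + 1))) < 1 / 2 := by
  have f1 := Nat.factorial_pos N
  have f2 := Nat.factorial_pos (2 * N - 2 * m + 1)
  have f3 := Nat.factorial_pos (N - m)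
  have f4 := Nat.factorial_pos (2 * N - m + 1)
  constructor
  · apply div_pos <;> positivity
  · rw [div_lt_div_iff₀ (by positivity) (by norm_num)]
    set a := N - m with ha
    have h1 : 2 * N - 2 * m + 1 = 2 * a + 1 := by omega
    have h2 : 2 * N - m + 1 = 2 * a + m + 1 := by omega
    have h4 : N = a + m := by omega
    rw [h1, h2, h4]
    have h := key_fact a m hm2
    have h' : (2 * Nat.factorial (a + m) * Nat.factorial (2 * a + 1) : ℝ) <
        Nat.factorial a * Nat.factorial (2 * a + m + 1) := by exact_mod_cast h
    push_cast
    nlinarith [h']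
end
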